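/- Let P be a totally ordered set and V a pointwise finite dimensional persistence module indexed by P. Assume P has a minimal element z and V_z ≠ 0. Let B be a basis of V_z compatible with the flag of kernels of V at z, and let v ∈ B. Then there exists an internal direct sum decomposition V = U ⊕ W such that: (1) U is an interval module; (2) {v} is a basis of U_z; (3) B − {v} is a basis of W_z. -/

import Mathlib

universe u v w w'

/-- A persistence module indexed by a poset `P`, over a field `k`. -/
structure PersMod (k : Type u) [Field k] (P : Type v) [PartialOrder P] :
    Type (max u v (w + 1)) where
  space : P → Type w
  [acg : ∀ x, AddCommGroup (space x)]
  [mod : ∀ x, Module k (space x)]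
  map : ∀ {x y : P}, x ≤ y → (space x →ₗ[k] space y)
  map_id : ∀ x : P, map (le_refl x) = LinearMap.id
  map_comp : ∀ {x y z : P} (hxy : x ≤ y) (hyz : y ≤ z),
    (map hyz).comp (map hxy) = map (hxy.trans hyz)

attribute [instance] PersMod.acg PersMod.mod

variable (k : Type u) [Field k] {P : Type v} [PartialOrder P]

/-- A morphism of persistence modules (a natural transformation). -/
structure PersHom (V : PersMod.{u, v, w} k P) (W : PersMod.{u, v, w'} k P) where
  app : ∀ x : P, V.space x →ₗ[k] W.space x
  natural : ∀ {x y : P} (h : x ≤ y) (v : V.space x),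
    app y (V.map h v) = W.map h (app x v)

/-- An isomorphism of persistence modules. -/
structure PersIso (V : PersMod.{u, v, w} k P) (W : PersMod.{u, v, w'} k P) where
  app : ∀ x : P, V.space x ≃ₗ[k] W.space x
  natural : ∀ {x y : P} (h : x ≤ y) (v : V.space x),
    app y (V.map h v) = W.map h (app x v)

/-- A subset `I` of a poset is convex if `x ≤ y ≤ z`, `x ∈ I`, `z ∈ I` imply `y ∈ I`. -/
def IsConvexIn (I : Set P) : Prop :=
  ∀ ⦃x y z : P⦄, x ∈ I → z ∈ I → x ≤ y → y ≤ z → y ∈ I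

/-- A subset `I` of a poset is connected if any two points of `I` are joined by a
zigzag path inside `I`. -/
def IsConnectedIn (I : Set P) : Prop :=
  ∀ x ∈ I, ∀ z ∈ I, ∃ (n : ℕ) (c : ℕ → P), (∀ i ≤ n, c i ∈ I) ∧ c 0 = x ∧ c n = z ∧
    ∀ i < n, c i ≤ c (i + 1) ∨ c (i + 1) ≤ c i

/-- An interval in a poset: nonempty, convex and connected. -/
def IsPosetInterval (I : Set P) : Prop :=
  I.Nonempty ∧ IsConvexIn I ∧ IsConnectedIn I

open Classical in
/-- The subspace of `k` used as the value of the constant module at `x`. -/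
noncomputable def constSub (I : Set P) (x : P) : Submodule k k :=
  if x ∈ I then ⊤ else ⊥

open Classical in
/-- The structure map of the constant module. -/
noncomputable def constMap (I : Set P) (x y : P) :
    constSub k I x →ₗ[k] constSub k I y :=
  LinearMap.codRestrict (constSub k I y)
    ((if y ∈ I then (LinearMap.id : k →ₗ[k] k) else 0).comp (constSub k I x).subtype)
    (fun c => by
      by_cases hy : y ∈ I
      · simp [constSub, hy]
      · simp only [constSub, hy, if_false]
        exact Submodule.zero_mem _)

open Classical in
/-- The constant (interval) module `M(I)` attached to a convex subset `I`. -/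
noncomputable def constMod (I : Set P) (hI : IsConvexIn I) : PersMod.{u, v, u} k P where
  space x := constSub k I x
  map {x y} _ := constMap k I x y
  map_id := fun x => by
    ext c
    by_cases hx : x ∈ I
    · simp [constMap, hx]
    · have hc : (c : k) = 0 := by
        have this : (c : k) ∈ constSub k I x := c.2
        simp only [constSub, hx, if_false] at this
        exact (Submodule.mem_bot k).mp this
      simp [constMap, hx, hc]
  map_comp := fun {x y z} hxy hyz => by
    ext c
    by_cases hz : z ∈ I
    · by_cases hy : y ∈ I
      · simp [constMap, hy, hz]
      · have hx : x ∉ I := fun hx => hy (hI hx hz hxy hyz)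
        have hc : (c : k) = 0 := by
          have this : (c : k) ∈ constSub k I x := c.2
          simp only [constSub, hx, if_false] at this
          exact (Submodule.mem_bot k).mp this
        simp [constMap, hy, hz, hc]
    · simp [constMap, hz]

/-- A submodule of a persistence module: a family of subspaces preserved by the
structure maps. -/
structure PersSubmod (V : PersMod.{u, v, w} k P) where
  carrier : ∀ x : P, Submodule k (V.space x)
  mapLe : ∀ {x y : P} (h : x ≤ y), ∀ v ∈ carrier x, V.map h v ∈ carrier y

/-- A submodule of a persistence module, viewed as a persistence module in its own
right. -/
def PersSubmod.toPersMod {V : PersMod.{u, v, w} k P} (U : PersSubmod k V) :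
    PersMod.{u, v, w} k P where
  space x := U.carrier x
  map {x y} h := (V.map h).restrict (U.mapLe h)
  map_id := fun x => by
    ext c
    simp [LinearMap.restrict_apply, V.map_id]
  map_comp := fun {x y z} hxy hyz => by
    ext c
    have := LinearMap.congr_fun (V.map_comp hxy hyz) (c : V.space x)
    simpa [LinearMap.restrict_apply] using this

/-- A persistence module is an interval module if it is isomorphic to a constant
module `M(I)` for some interval `I`. -/
def IsIntervalModule (V : PersMod.{u, v, w} k P) : Prop :=
  ∃ (I : Set P) (hI : IsPosetInterval I), Nonempty (PersIso k V (constMod k I hI.2.1))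

/-- `A` is an internal direct sum decomposition of `V`:
at each point the subspaces are independent and span everything. -/
def IsDecomp (V : PersMod.{u, v, w} k P) (A : Set (PersSubmod k V)) : Prop :=
  ∀ x : P, iSupIndep (fun U : A => (U : PersSubmod k V).carrier x) ∧
    ⨆ U : A, (U : PersSubmod k V).carrier x = ⊤

/-- An interval decomposition of `V`. -/
def IsIntervalDecomp (V : PersMod.{u, v, w} k P) (A : Set (PersSubmod k V)) : Prop :=
  IsDecomp k V A ∧ ∀ U ∈ A, IsIntervalModule k U.toPersMod

/-- `V` has an interval decomposition. -/
def HasIntervalDecomp (V : PersMod.{u, v, w} k P) : Prop :=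
  ∃ A : Set (PersSubmod k V), IsIntervalDecomp k V A

/-!
Put `u x = V_{z,x} v`. Its support is a down-set containing the least element `z`, hence an
interval, and the lines `span {u x}` form an interval submodule `U`. A complementary submodule
is cut out by a family of functionals `ψ x` with `ψ x (u x) = 1` that is compatible with the
structure maps on the support. At `z` take the coordinate functional of `v` with respect to
`B`: since `B` is compatible with the flag of kernels, it kills `ker V_{z,y}` whenever
`u y ≠ 0`. This invariant lets Zorn's lemma extend the family point by point: at a new
point `x`, the images of the kernels of the functionals already chosen below `x`, together with
the kernels of the maps from `x` into the support, do not contain `u x`, so some functional at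
`x` kills them and takes the value `1` at `u x`.
-/

variable {k}

open Submodule LinearMap

theorem Submodule.isCompl_span_singleton_ker {E : Type*} [AddCommGroup E] [Module k E]
    {f : Module.Dual k E} {u : E} (hf : f u = 1) : IsCompl (span k {u}) (ker f) := by
  refine ⟨disjoint_def.mpr fun w hw hwf => ?_, codisjoint_iff.mpr (eq_top_iff.mpr fun w _ => ?_)⟩
  · obtain ⟨c, rfl⟩ := mem_span_singleton.mp hw
    simp only [mem_ker, map_smul, hf, smul_eq_mul, mul_one] at hwf
    rw [hwf, zero_smul]
  · exact mem_sup.mpr ⟨f w • u, smul_mem _ _ (mem_span_singleton_self u), w - f w • u,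
      by simp [hf], by abel⟩

theorem Module.Dual.eq_of_ker_le {E : Type*} [AddCommGroup E] [Module k E]
    {f g : Module.Dual k E} {u : E} (hker : ker f ≤ ker g) (hf : f u = 1) (hg : g u = 1) :
    f = g := by
  ext w
  have hw : w - f w • u ∈ ker g := hker (by simp [hf])
  rw [eq_comm]
  simpa [hg, sub_eq_zero] using hw

theorem Submodule.exists_dual_apply_eq_one_of_notMem {E : Type*} [AddCommGroup E] [Module k E]
    {N : Submodule k E} {u : E} (hu : u ∉ N) :
    ∃ f : Module.Dual k E, f u = 1 ∧ N ≤ ker f := by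
  obtain ⟨f, hfu, hfN⟩ := exists_dual_map_eq_bot_of_notMem hu inferInstance
  refine ⟨(f u)⁻¹ • f, inv_mul_cancel₀ hfu, ?_⟩
  rw [ker_smul _ _ (inv_ne_zero hfu), le_ker_iff_map, hfN]

theorem Module.Basis.ker_coord {ι E : Type*} [AddCommGroup E] [Module k E]
    (b : Module.Basis ι k E) (i : ι) : ker (b.coord i) = span k (b '' {i}ᶜ) := by
  ext m
  simp [b.mem_span_image, Set.subset_compl_singleton_iff]

theorem isPosetInterval_of_isLowerSet {I : Set P} {z : P} (hz : ∀ x, z ≤ x) (hzI : z ∈ I)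
    (hI : IsLowerSet I) : IsPosetInterval I := by
  refine ⟨⟨z, hzI⟩, fun x y w _ hw _ hyw => hI hyw hw, fun x hx y hy => ?_⟩
  refine ⟨2, fun i => if i = 0 then x else if i = 1 then z else y, ?_, by simp, by simp, ?_⟩
  · intro i hi
    interval_cases i <;> simpa
  · intro i hi
    interval_cases i
    · exact Or.inr (by simpa using hz x)
    · exact Or.inl (by simpa using hz y)

namespace PersIso

variable {V : PersMod.{u, v, w} k P} {W : PersMod.{u, v, w'} k P}

def symm (e : PersIso k V W) : PersIso k W V where
  app x := (e.app x).symm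
  natural h w := by
    rw [LinearEquiv.symm_apply_eq, e.natural, LinearEquiv.apply_symm_apply]

noncomputable def ofBijective (f : PersHom k V W) (hf : ∀ x, Function.Bijective (f.app x)) :
    PersIso k V W where
  app x := LinearEquiv.ofBijective (f.app x) (hf x)
  natural := f.natural

end PersIso

namespace PersMod

@[simp]
theorem map_map (V : PersMod.{u, v, w} k P) {x y z : P} (hxy : x ≤ y) (hyz : y ≤ z)
    (w : V.space x) : V.map hyz (V.map hxy w) = V.map (hxy.trans hyz) w :=
  LinearMap.congr_fun (V.map_comp hxy hyz) w

theorem ker_map_mono (V : PersMod.{u, v, w} k P) {x y z : P} (hxy : x ≤ y) (hyz : y ≤ z) :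
    ker (V.map hxy) ≤ ker (V.map (hxy.trans hyz)) := fun w hw => by
  rw [mem_ker, ← map_map V hxy hyz, mem_ker.mp hw, map_zero]

def pullbackGraph (V : PersMod.{u, v, w} k P) {x : P} (f : Module.Dual k (V.space x)) :
    Set (Σ y, Module.Dual k (V.space y)) :=
  {p | ∃ h : p.1 ≤ x, p.2 = f ∘ₗ V.map h}

theorem mem_pullbackGraph (V : PersMod.{u, v, w} k P) {x y : P} {f : Module.Dual k (V.space x)}
    {g : Module.Dual k (V.space y)} : ⟨y, g⟩ ∈ V.pullbackGraph f ↔ ∃ h : y ≤ x, g = f ∘ₗ V.map h :=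
  Iff.rfl

theorem self_mem_pullbackGraph (V : PersMod.{u, v, w} k P) {x : P}
    (f : Module.Dual k (V.space x)) : ⟨x, f⟩ ∈ V.pullbackGraph f :=
  ⟨le_rfl, by rw [V.map_id]; rfl⟩

theorem isLowerSet_setOf_ne_zero {V : PersMod.{u, v, w} k P} (u : ∀ x, V.space x)
    (hu : ∀ {x y : P} (h : x ≤ y), V.map h (u x) = u y) : IsLowerSet {x | u x ≠ 0} :=
  fun _ _ hba ha hb => ha (by rw [← hu hba, hb, map_zero])

end PersMod

namespace PersSubmod

variable {V : PersMod.{u, v, w} k P} (u : ∀ x, V.space x)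
  (hu : ∀ {x y : P} (h : x ≤ y), V.map h (u x) = u y)
include hu

def spanSection : PersSubmod k V where
  carrier x := span k {u x}
  mapLe h w hw := by
    obtain ⟨c, rfl⟩ := mem_span_singleton.mp hw
    rw [map_smul, hu]
    exact smul_mem _ _ (mem_span_singleton_self _)

noncomputable def constModToSpanSection (hI : IsConvexIn {x | u x ≠ 0}) :
    PersHom k (constMod k {x | u x ≠ 0} hI) (spanSection u hu).toPersMod where
  app x := (toSpanSingleton k _ (u x)).restrict (p := constSub k _ x) (q := span k {u x})
    fun c _ => smul_mem _ _ (mem_span_singleton_self _)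
  natural {x y} h := by
    rintro ⟨c, hc⟩
    apply Subtype.ext
    change (constMap k {x | u x ≠ 0} x y ⟨c, hc⟩ : k) • u y = V.map h (c • u x)
    rw [map_smul, hu]
    by_cases hy : u y = 0
    · simp [hy]
    · simp [constMap, hy]

theorem bijective_constModToSpanSection (hI : IsConvexIn {x | u x ≠ 0}) (x : P) :
    Function.Bijective ((constModToSpanSection u hu hI).app x) := by
  constructor
  · rintro ⟨c, hc⟩ ⟨c', hc'⟩ he
    replace he : c • u x = c' • u x := congrArg Subtype.val he
    apply Subtype.ext
    by_cases hx : u x = 0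
    · have hbot : constSub k {x | u x ≠ 0} x = ⊥ := if_neg (not_not.mpr hx)
      change c = c'
      rw [(mem_bot k).mp (hbot ▸ hc : c ∈ (⊥ : Submodule k k)),
        (mem_bot k).mp (hbot ▸ hc' : c' ∈ (⊥ : Submodule k k))]
    · exact smul_left_injective k hx he
  · rintro ⟨w, hw⟩
    obtain ⟨c, rfl⟩ := mem_span_singleton.mp hw
    by_cases hx : u x = 0
    · exact ⟨0, Subtype.ext (by simp [hx]; rfl)⟩
    · have htop : constSub k {x | u x ≠ 0} x = ⊤ := if_pos hx
      exact ⟨⟨c, htop ▸ mem_top⟩, rfl⟩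

theorem isIntervalModule_spanSection (hI : IsPosetInterval {x | u x ≠ 0}) :
    IsIntervalModule k (spanSection u hu).toPersMod :=
  ⟨_, hI, ⟨(PersIso.ofBijective _ (bijective_constModToSpanSection u hu hI.2.1)).symm⟩⟩

section

variable (ψ : ∀ x, Module.Dual k (V.space x))
  (hψ : ∀ {x y : P} (h : x ≤ y), u y ≠ 0 → ψ y ∘ₗ V.map h = ψ x)
include hψ

def kerSection : PersSubmod k V where
  carrier x := ⨅ _ : u x ≠ 0, ker (ψ x)
  mapLe {x y} h w hw := by
    simp only [mem_iInf, mem_ker] at hw ⊢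
    intro hy
    rw [← LinearMap.comp_apply, hψ h hy]
    exact hw (PersMod.isLowerSet_setOf_ne_zero u hu h hy)

theorem isCompl_spanSection_kerSection (hψu : ∀ x, u x ≠ 0 → ψ x (u x) = 1) (x : P) :
    IsCompl ((spanSection u hu).carrier x) ((kerSection u hu ψ hψ).carrier x) := by
  by_cases hx : u x = 0
  · simpa [spanSection, kerSection, hx] using isCompl_bot_top
  · simpa [spanSection, kerSection, hx] using isCompl_span_singleton_ker (hψu x hx)

end

end PersSubmod

namespace PersMod

variable {P : Type v} [LinearOrder P] {V : PersMod.{u, v, w} k P} (u : ∀ x, V.space x)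

/-- Graph of a family of functionals on a down-set, compatible with the structure maps. Encoding
partial families by their graphs makes the union of a chain an upper bound for Zorn's lemma. -/
structure IsDualGraph (G : Set (Σ x, Module.Dual k (V.space x))) : Prop where
  eq_of_mem : ∀ {x f g}, ⟨x, f⟩ ∈ G → ⟨x, g⟩ ∈ G → f = g
  comp_mem : ∀ {x y f} (h : x ≤ y), ⟨y, f⟩ ∈ G → ⟨x, f ∘ₗ V.map h⟩ ∈ G
  apply_eq_one : ∀ {x f}, ⟨x, f⟩ ∈ G → f (u x) = 1
  ker_le : ∀ {x y f} (h : x ≤ y), ⟨x, f⟩ ∈ G → u y ≠ 0 → ker (V.map h) ≤ ker f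

namespace IsDualGraph

variable {u} {G : Set (Σ x, Module.Dual k (V.space x))}

theorem comp_eq (hG : IsDualGraph u G) {x y : P} {f : Module.Dual k (V.space x)}
    {g : Module.Dual k (V.space y)} (h : x ≤ y) (hf : ⟨x, f⟩ ∈ G) (hg : ⟨y, g⟩ ∈ G) :
    g ∘ₗ V.map h = f :=
  hG.eq_of_mem (hG.comp_mem h hg) hf

theorem empty : IsDualGraph u (∅ : Set (Σ x, Module.Dual k (V.space x))) :=
  ⟨fun h => h.elim, fun _ h => h.elim, fun h => h.elim, fun _ h => h.elim⟩

theorem sUnion {c : Set (Set (Σ x, Module.Dual k (V.space x)))} (hc : ∀ G ∈ c, IsDualGraph u G)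
    (hchain : IsChain (· ⊆ ·) c) : IsDualGraph u (⋃₀ c) where
  eq_of_mem := by
    rintro x f g ⟨G₁, hG₁, hf⟩ ⟨G₂, hG₂, hg⟩
    rcases hchain.total hG₁ hG₂ with h | h
    · exact (hc G₂ hG₂).eq_of_mem (h hf) hg
    · exact (hc G₁ hG₁).eq_of_mem hf (h hg)
  comp_mem := fun h ⟨G, hG, hf⟩ => ⟨G, hG, (hc G hG).comp_mem h hf⟩
  apply_eq_one := fun ⟨G, hG, hf⟩ => (hc G hG).apply_eq_one hf
  ker_le := fun h ⟨G, hG, hf⟩ => (hc G hG).ker_le h hf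

theorem map_ker_le_map_ker (hG : IsDualGraph u G) {d d' x : P} {g : Module.Dual k (V.space d)}
    {g' : Module.Dual k (V.space d')} (h : d ≤ d') (hd' : d' ≤ x) (hg : ⟨d, g⟩ ∈ G)
    (hg' : ⟨d', g'⟩ ∈ G) : (ker g).map (V.map (h.trans hd')) ≤ (ker g').map (V.map hd') := by
  rintro _ ⟨w, hw, rfl⟩
  refine ⟨V.map h w, ?_, map_map V _ _ w⟩
  rw [SetLike.mem_coe, mem_ker, ← LinearMap.comp_apply, hG.comp_eq h hg hg']
  exact hw

variable (hu : ∀ {x y : P} (h : x ≤ y), V.map h (u x) = u y)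
include hu

theorem union_pullbackGraph (hG : IsDualGraph u G) {x : P} {f : Module.Dual k (V.space x)}
    (hfu : f (u x) = 1) (hGf : ∀ {d g} (h : d ≤ x), ⟨d, g⟩ ∈ G → g = f ∘ₗ V.map h)
    (hker : ∀ {y} (h : x ≤ y), u y ≠ 0 → ker (V.map h) ≤ ker f) :
    IsDualGraph u (G ∪ V.pullbackGraph f) where
  eq_of_mem := by
    rintro y g g' (hg | hg) (hg' | hg')
    · exact hG.eq_of_mem hg hg'
    · obtain ⟨hy, rfl⟩ := V.mem_pullbackGraph.mp hg'
      exact hGf hy hg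
    · obtain ⟨hy, rfl⟩ := V.mem_pullbackGraph.mp hg
      exact (hGf hy hg').symm
    · obtain ⟨hy, rfl⟩ := V.mem_pullbackGraph.mp hg
      obtain ⟨_, rfl⟩ := V.mem_pullbackGraph.mp hg'
      rfl
  comp_mem := by
    rintro y y' g h (hg | hg)
    · exact Or.inl (hG.comp_mem h hg)
    · obtain ⟨hy', rfl⟩ := V.mem_pullbackGraph.mp hg
      refine Or.inr ⟨h.trans hy', ?_⟩
      ext w
      simp
  apply_eq_one := by
    rintro y g (hg | hg)
    · exact hG.apply_eq_one hg
    · obtain ⟨hy, rfl⟩ := V.mem_pullbackGraph.mp hg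
      simpa [hu] using hfu
  ker_le := by
    rintro y y' g h (hg | hg) hy' w hw
    · exact hG.ker_le h hg hy' hw
    obtain ⟨hy, rfl⟩ := V.mem_pullbackGraph.mp hg
    rw [mem_ker] at hw ⊢
    rcases le_total y' x with hy'x | hxy'
    · rw [LinearMap.comp_apply, ← map_map V h hy'x, hw, map_zero, map_zero]
    · refine hker hxy' hy' ?_
      rw [mem_ker, map_map]
      exact hw

theorem exists_extension (hG : IsDualGraph u G) (hne : G.Nonempty) {x : P} (hx : u x ≠ 0)
    (hxG : ∀ f, ⟨x, f⟩ ∉ G) :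
    ∃ f : Module.Dual k (V.space x), f (u x) = 1 ∧
      (∀ {d g} (h : d ≤ x), ⟨d, g⟩ ∈ G → g = f ∘ₗ V.map h) ∧
      ∀ {y} (h : x ≤ y), u y ≠ 0 → ker (V.map h) ≤ ker f := by
  have hle : ∀ p ∈ G, p.1 ≤ x := fun p hp => le_of_not_ge fun h => hxG _ (hG.comp_mem h hp)
  let F₁ (p : G) : Submodule k (V.space x) := (ker p.1.2).map (V.map (hle p.1 p.2))
  let F₂ (y : {y // x ≤ y ∧ u y ≠ 0}) : Submodule k (V.space x) := ker (V.map y.2.1)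
  have hF₁ : Directed (· ≤ ·) F₁ := fun p q =>
    (le_total p.1.1 q.1.1).elim (fun h => ⟨q, hG.map_ker_le_map_ker h _ p.2 q.2, le_rfl⟩)
      fun h => ⟨p, le_rfl, hG.map_ker_le_map_ker h _ q.2 p.2⟩
  have hF₂ : Directed (· ≤ ·) F₂ := Monotone.directed_le fun y y' h => V.ker_map_mono y.2.1 h
  -- `u x = V_{d,x} w + b` with `g w = 0` and `V_{x,y} b = 0` puts `w - u d` in `ker V_{d,y}`,
  -- so `ker_le` would give `g (u d) = 0`
  have hux : u x ∉ (⨆ p, F₁ p) ⊔ ⨆ y, F₂ y := by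
    intro hmem
    have : Nonempty G := hne.to_subtype
    have : Nonempty {y // x ≤ y ∧ u y ≠ 0} := ⟨⟨x, le_rfl, hx⟩⟩
    obtain ⟨a, ha, b, hb, hab⟩ := mem_sup.mp hmem
    obtain ⟨⟨⟨d, g⟩, hg⟩, w, hw, rfl⟩ := (mem_iSup_of_directed _ hF₁).mp ha
    obtain ⟨⟨y, hxy, hy⟩, hb⟩ := (mem_iSup_of_directed _ hF₂).mp hb
    have hdx : d ≤ x := hle _ hg
    have hwu : w - u d ∈ ker (V.map (hdx.trans hxy)) := by
      rw [mem_ker, map_sub, ← map_map V hdx hxy, hu, ← hu hxy, ← hab, map_add, mem_ker.mp hb]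
      simp
    have hgwu := hG.ker_le _ hg hy hwu
    simp [hG.apply_eq_one hg, mem_ker.mp hw] at hgwu
  obtain ⟨f, hfu, hfN⟩ := exists_dual_apply_eq_one_of_notMem hux
  refine ⟨f, hfu, fun h hg => ?_, fun h hy => ?_⟩
  · refine Module.Dual.eq_of_ker_le (fun w hw => ?_) (hG.apply_eq_one hg) (by simpa [hu] using hfu)
    exact hfN (mem_sup_left (mem_iSup_of_mem ⟨_, hg⟩ (mem_map_of_mem hw)))
  · exact le_trans (le_trans (le_iSup F₂ ⟨_, h, hy⟩) le_sup_right) hfN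

end IsDualGraph

theorem exists_dual_section (hu : ∀ {x y : P} (h : x ≤ y), V.map h (u x) = u y) {x₀ : P}
    (φ : Module.Dual k (V.space x₀)) (hφ : φ (u x₀) = 1)
    (hker : ∀ {y} (h : x₀ ≤ y), u y ≠ 0 → ker (V.map h) ≤ ker φ) :
    ∃ ψ : ∀ x, Module.Dual k (V.space x), ψ x₀ = φ ∧
      (∀ {x y} (h : x ≤ y), u y ≠ 0 → ψ y ∘ₗ V.map h = ψ x) ∧
      ∀ x, u x ≠ 0 → ψ x (u x) = 1 := by
  have hseed : IsDualGraph u (V.pullbackGraph φ) := by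
    simpa using IsDualGraph.empty.union_pullbackGraph hu hφ (fun _ h => h.elim) hker
  obtain ⟨G, hseedG, hGmax⟩ := zorn_subset_nonempty {G | IsDualGraph u G}
    (fun c hc hchain _ => ⟨⋃₀ c, IsDualGraph.sUnion hc hchain, fun _ => Set.subset_sUnion_of_mem⟩)
    _ hseed
  have hG : IsDualGraph u G := hGmax.prop
  have hφG : ⟨x₀, φ⟩ ∈ G := hseedG (V.self_mem_pullbackGraph φ)
  have hdom : ∀ x, u x ≠ 0 → ∃ f, ⟨x, f⟩ ∈ G := by
    intro x hx
    by_contra! hxG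
    obtain ⟨f, hfu, hGf, hfker⟩ := hG.exists_extension hu ⟨_, hφG⟩ hx hxG
    exact hxG f (hGmax.2 (hG.union_pullbackGraph hu hfu hGf hfker) Set.subset_union_left
      (Or.inr (V.self_mem_pullbackGraph f)))
  choose! ψ hψ using hdom
  have hφu : u x₀ ≠ 0 := fun h => by simp [h] at hφ
  exact ⟨ψ, hG.eq_of_mem (hψ x₀ hφu) hφG,
    fun h hy => hG.comp_eq h (hψ _ (isLowerSet_setOf_ne_zero u hu h hy)) (hψ _ hy),
    fun x hx => hG.apply_eq_one (hψ x hx)⟩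

end PersMod

theorem split_interval_at_min_general (P : Type v) [LinearOrder P]
    (V : PersMod.{u, v, w} k P)
    (z : P) (hz : ∀ x : P, z ≤ x)
    (B : Set (V.space z))
    (hBind : LinearIndependent k ((↑) : B → V.space z))
    (hBspan : Submodule.span k B = ⊤)
    (hBcompat : ∀ (x : P) (h : z ≤ x),
      Submodule.span k (B ∩ LinearMap.ker (V.map h)) = LinearMap.ker (V.map h))
    (v : V.space z) (hv : v ∈ B) :
    ∃ U W : PersSubmod k V,
      (∀ x : P, IsCompl (U.carrier x) (W.carrier x)) ∧
      IsIntervalModule k U.toPersMod ∧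
      U.carrier z = Submodule.span k {v} ∧
      W.carrier z = Submodule.span k (B \ {v}) := by
  set u : ∀ x, V.space x := fun x => V.map (hz x) v
  have hu : ∀ {x y : P} (h : x ≤ y), V.map h (u x) = u y := fun h => V.map_map _ h v
  have huz : u z = v := by simp [u, V.map_id]
  set b := Module.Basis.mk hBind (by rw [Subtype.range_coe, hBspan])
  set φ := b.coord ⟨v, hv⟩
  have hφ : φ (u z) = 1 := by
    rw [huz, ← show b ⟨v, hv⟩ = v from Module.Basis.mk_apply _ _ _, Module.Basis.coord_apply,
      Module.Basis.repr_self, Finsupp.single_eq_same]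
  have hkerφ : ker φ = span k (B \ {v}) := by
    rw [Module.Basis.ker_coord]
    congr 1
    ext w
    simp [b, and_comm]
  obtain ⟨ψ, hψz, hψ, hψu⟩ := PersMod.exists_dual_section u hu φ hφ fun {y} h hy => by
    rw [← hBcompat y h, hkerφ]
    exact span_mono fun w ⟨hwB, hw⟩ => ⟨hwB, fun hwv => hy <| by
      change V.map h v = 0
      rwa [← Set.mem_singleton_iff.mp hwv]⟩
  have hz0 : u z ≠ 0 := fun h => by simp [h] at hφ
  refine ⟨PersSubmod.spanSection u hu, PersSubmod.kerSection u hu ψ hψ,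
    PersSubmod.isCompl_spanSection_kerSection u hu ψ hψ hψu,
    PersSubmod.isIntervalModule_spanSection u hu (isPosetInterval_of_isLowerSet hz hz0
      (PersMod.isLowerSet_setOf_ne_zero u hu)), by simp [PersSubmod.spanSection, huz], ?_⟩
  simp [PersSubmod.kerSection, hz0, hψz, hkerφ]

/-- Splitting off an interval summand at a minimal element: let `P` be totally
ordered with least element `z`, `V` pointwise finite dimensional with `V_z ≠ 0`,
`B` a basis of `V_z` compatible with the flag of kernels of `V` at `z`, and `v ∈ B`.
Then `V = U ⊕ W` with `U` an interval module, `{v}` a basis of `U_z` and `B - {v}` a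
basis of `W_z`. -/
theorem split_interval_at_min (P : Type v) [LinearOrder P]
    (V : PersMod.{u, v, w} k P) (hfd : ∀ x : P, FiniteDimensional k (V.space x))
    (z : P) (hz : ∀ x : P, z ≤ x) (hVz : ∃ v : V.space z, v ≠ 0)
    (B : Set (V.space z))
    (hBind : LinearIndependent k ((↑) : B → V.space z))
    (hBspan : Submodule.span k B = ⊤)
    (hBcompat : ∀ (x : P) (h : z ≤ x),
      Submodule.span k (B ∩ LinearMap.ker (V.map h)) = LinearMap.ker (V.map h))
    (v : V.space z) (hv : v ∈ B) :
    ∃ U W : PersSubmod k V,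
      (∀ x : P, IsCompl (U.carrier x) (W.carrier x)) ∧
      IsIntervalModule k U.toPersMod ∧
      U.carrier z = Submodule.span k {v} ∧
      W.carrier z = Submodule.span k (B \ {v}) :=
  split_interval_at_min_general P V z hz B hBind hBspan hBcompat v hv
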